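/- For any Minkowski space M^n, the ceiling of the maximal Minkowski asymmetry over complete bodies is at most the Helly dimension: ⌈s(M^n)⌉ ≤ him(M^n). -/

import Mathlib

open Set Pointwise

/-- `V n` is `ℝ^n` (as a Euclidean space, also used as carrier for general
Minkowski spaces whose unit ball `B` is given as a set). -/
abbrev V (n : ℕ) := EuclideanSpace ℝ (Fin n)

/-- A convex body: compact, convex, with nonempty interior. -/
def IsConvexBody {n : ℕ} (K : Set (V n)) : Prop :=
  Convex ℝ K ∧ IsCompact K ∧ (interior K).Nonempty

/-- A (centrally) symmetric unit ball of a norm. -/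
def IsSymUnitBall {n : ℕ} (B : Set (V n)) : Prop :=
  IsConvexBody B ∧ B = -B

/-- Circumradius of `K` with respect to the unit ball `B`. -/
noncomputable def circum {n : ℕ} (B K : Set (V n)) : ℝ :=
  sInf {ρ : ℝ | 0 < ρ ∧ ∃ c : V n, K ⊆ c +ᵥ ρ • B}

/-- Inradius of `K` with respect to the unit ball `B`. -/
noncomputable def inrad {n : ℕ} (B K : Set (V n)) : ℝ :=
  sSup {ρ : ℝ | 0 < ρ ∧ ∃ c : V n, c +ᵥ ρ • B ⊆ K}

/-- Diameter of `K` in the norm with unit ball `B` (via the Minkowski gauge). -/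
noncomputable def mdiam {n : ℕ} (B K : Set (V n)) : ℝ :=
  sSup {d : ℝ | ∃ x ∈ K, ∃ y ∈ K, d = gauge B (x - y)}

/-- Minkowski asymmetry of `K`. -/
noncomputable def asym {n : ℕ} (K : Set (V n)) : ℝ :=
  sInf {ρ : ℝ | 0 < ρ ∧ ∃ c : V n, -K ⊆ c +ᵥ ρ • K}

/-- `K` is complete (diametrically maximal) w.r.t. the unit ball `B`. -/
def IsCompleteBody {n : ℕ} (B K : Set (V n)) : Prop :=
  IsConvexBody K ∧ ∀ x : V n, x ∉ K → mdiam B K < mdiam B (K ∪ {x})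

/-- `Kstar` is a completion of `K` w.r.t. the unit ball `B`. -/
def IsCompletionOf {n : ℕ} (B Kstar K : Set (V n)) : Prop :=
  IsCompleteBody B Kstar ∧ K ⊆ Kstar ∧ mdiam B Kstar = mdiam B K

/-- Jung ratio `R(K)/D(K)`. -/
noncomputable def jungRatio {n : ℕ} (B K : Set (V n)) : ℝ :=
  circum B K / mdiam B K

/-- Jung constant of the Minkowski space with unit ball `B`. -/
noncomputable def jungConst {n : ℕ} (B : Set (V n)) : ℝ :=
  sSup {j : ℝ | ∃ K : Set (V n), IsConvexBody K ∧ j = jungRatio B K}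

/-- Maximal Minkowski asymmetry over complete bodies. -/
noncomputable def asymConst {n : ℕ} (B : Set (V n)) : ℝ :=
  sSup {s : ℝ | ∃ K : Set (V n), IsCompleteBody B K ∧ s = asym K}

/-- Banach–Mazur distance between `K` and `C`. -/
noncomputable def dBM {n : ℕ} (K C : Set (V n)) : ℝ :=
  sInf {ρ : ℝ | 0 < ρ ∧ ∃ (A : (V n) ≃ᵃ[ℝ] (V n)) (x : V n),
    K ⊆ A '' C ∧ A '' C ⊆ x +ᵥ ρ • K}

/-- `S` is a `k`-dimensional simplex. -/
def IsSimplexDim {n : ℕ} (k : ℕ) (S : Set (V n)) : Prop :=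
  ∃ v : Fin (k + 1) → V n, AffineIndependent ℝ v ∧ S = convexHull ℝ (Set.range v)

/-- Helly property with parameter `k` for translates of `B`. -/
def HellyProp {n : ℕ} (B : Set (V n)) (k : ℕ) : Prop :=
  ∀ X : Set (V n), X.Nonempty →
    (∀ J : Finset (V n), ↑J ⊆ X → J.card ≤ k + 1 →
      (⋂ x ∈ (J : Set (V n)), (x +ᵥ B)).Nonempty) →
    (⋂ x ∈ X, (x +ᵥ B)).Nonempty

/-- Helly dimension of `B`: the least positive `k` with the Helly property. -/
noncomputable def hellyDim {n : ℕ} (B : Set (V n)) : ℕ :=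
  sInf {k : ℕ | 0 < k ∧ HellyProp B k}

/-- `K` is of constant width w.r.t. the unit ball `B`: `K - K` is a dilate of `B`. -/
def IsConstWidth {n : ℕ} (B K : Set (V n)) : Prop :=
  ∃ γ : ℝ, 0 < γ ∧ K - K = γ • B

/-- A regular `n`-simplex in Euclidean space. -/
def IsRegularSimplex {n : ℕ} (T : Set (V n)) : Prop :=
  ∃ v : Fin (n + 1) → V n, AffineIndependent ℝ v ∧
    (∀ i j k l, i ≠ j → k ≠ l → dist (v i) (v j) = dist (v k) (v l)) ∧
    T = convexHull ℝ (Set.range v)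

/-- The Euclidean unit ball in `ℝ^n`. -/
noncomputable def euclBall (n : ℕ) : Set (V n) := Metric.closedBall 0 1

/-- Pseudo completion of `K` with respect to the circumcenter `c`. -/
noncomputable def pseudoCompletion {n : ℕ} (B K : Set (V n)) (c : V n) : Set (V n) :=
  convexHull ℝ (K ∪ (c +ᵥ (mdiam B K - circum B K) • B))

/-! Let `k` be a Helly number of `B` and `K` a complete body of `B`-diameter `D`, and put
`ρ = k D / (k + 1)`. Points of `ρ⁻¹ K` are pairwise at `B`-distance at most `(k + 1) / k`, so the
centroid of any `m ≤ k + 1` of them is within `(m - 1)(k + 1) / (m k) ≤ 1` of each; by the Helly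
property `K ⊆ c + ρ B` for some `c` (the Boltyanski–Martini bound on the Jung constant).
For `x ∈ K` the point `c + (c - x) / k` is then within `ρ + ρ / k = D` of all of `K`, hence lies in
the complete body `K`; this says `-K ⊆ -(k + 1) c + k K`, so the asymmetry of `K` is at most `k`.
Helly's theorem makes `n + 1` a Helly number, so `him(B)` is attained. -/

open Topology

variable {n k : ℕ} {B K : Set (V n)}

namespace IsSymUnitBall

theorem neg_mem (hB : IsSymUnitBall B) {x : V n} (hx : x ∈ B) : -x ∈ B := by
  rw [hB.2]; simpa using hx

theorem zero_mem_interior (hB : IsSymUnitBall B) : (0 : V n) ∈ interior B := by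
  obtain ⟨u, hu⟩ := hB.1.2.2
  have hneg : -u ∈ interior B := by
    rw [hB.2]
    exact ((Homeomorph.neg (V n)).preimage_interior B).subset (by simpa using hu)
  simpa using hB.1.1.interior.midpoint_mem hu hneg

theorem mem_nhds_zero (hB : IsSymUnitBall B) : B ∈ 𝓝 (0 : V n) :=
  mem_interior_iff_mem_nhds.1 hB.zero_mem_interior

theorem absorbent (hB : IsSymUnitBall B) : Absorbent ℝ B :=
  absorbent_nhds_zero hB.mem_nhds_zero

theorem gauge_sub_comm (hB : IsSymUnitBall B) (x y : V n) :
    gauge B (x - y) = gauge B (y - x) := by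
  rw [← neg_sub, gauge_neg fun _ => hB.neg_mem]

theorem gauge_le_one_iff (hB : IsSymUnitBall B) {x : V n} : gauge B x ≤ 1 ↔ x ∈ B := by
  rw [gauge_le_one_iff_mem_closure hB.1.1 hB.mem_nhds_zero, hB.1.2.1.isClosed.closure_eq]

theorem gauge_sum_le (hB : IsSymUnitBall B) {ι : Type*} (s : Finset ι) (f : ι → V n) :
    gauge B (∑ i ∈ s, f i) ≤ ∑ i ∈ s, gauge B (f i) :=
  Finset.le_sum_of_subadditive _ gauge_zero.le (gauge_add_le hB.1.1 hB.absorbent) s f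

theorem gauge_centroid_sub_le (hB : IsSymUnitBall B) {J : Finset (V n)} {y : V n} (hy : y ∈ J)
    {d : ℝ} (hd : ∀ z ∈ J, gauge B (z - y) ≤ d) :
    gauge B ((J.card : ℝ)⁻¹ • ∑ z ∈ J, z - y) ≤ (J.card - 1) / J.card * d := by
  classical
  have hJ : (0 : ℝ) < J.card := by exact_mod_cast J.card_pos.2 ⟨y, hy⟩
  have hsum : (J.card : ℝ)⁻¹ • ∑ z ∈ J, z - y = (J.card : ℝ)⁻¹ • ∑ z ∈ J, (z - y) := by
    rw [Finset.sum_sub_distrib, Finset.sum_const, smul_sub, ← Nat.cast_smul_eq_nsmul ℝ,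
      inv_smul_smul₀ hJ.ne']
  calc gauge B ((J.card : ℝ)⁻¹ • ∑ z ∈ J, z - y)
      = (J.card : ℝ)⁻¹ * gauge B (∑ z ∈ J, (z - y)) := by
        rw [hsum, gauge_smul_of_nonneg (inv_nonneg.2 hJ.le), smul_eq_mul]
    _ ≤ (J.card : ℝ)⁻¹ * ∑ z ∈ J.erase y, gauge B (z - y) := by
        rw [Finset.sum_erase J (by simp)]
        gcongr
        exact hB.gauge_sum_le J _
    _ ≤ (J.card : ℝ)⁻¹ * ((J.card - 1) * d) := by
        gcongr
        refine (Finset.sum_le_card_nsmul _ _ d fun z hz => hd z (Finset.mem_of_mem_erase hz)).trans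
          (le_of_eq ?_)
        rw [nsmul_eq_mul, Finset.card_erase_of_mem hy, Nat.cast_pred (J.card_pos.2 ⟨y, hy⟩)]
    _ = (J.card - 1) / J.card * d := by ring

end IsSymUnitBall

theorem gauge_sub_le_mdiam (hB : IsSymUnitBall B) (hK : IsCompact K) {x y : V n}
    (hx : x ∈ K) (hy : y ∈ K) : gauge B (x - y) ≤ mdiam B K := by
  refine le_csSup ?_ ⟨x, hx, y, hy, rfl⟩
  refine (((hK.prod hK).image ((continuous_gauge hB.1.1 hB.mem_nhds_zero).comp
    continuous_sub)).bddAbove).mono ?_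
  rintro _ ⟨x, hx, y, hy, rfl⟩
  exact ⟨(x, y), ⟨hx, hy⟩, rfl⟩

theorem mdiam_nonneg (hB : IsSymUnitBall B) (hK : IsCompact K) (hne : K.Nonempty) :
    0 ≤ mdiam B K := by
  obtain ⟨x, hx⟩ := hne
  simpa using gauge_sub_le_mdiam hB hK hx hx

theorem mdiam_le {d : ℝ} (hd : 0 ≤ d) (h : ∀ x ∈ K, ∀ y ∈ K, gauge B (x - y) ≤ d) :
    mdiam B K ≤ d :=
  Real.sSup_le (by rintro _ ⟨x, hx, y, hy, rfl⟩; exact h x hx y hy) hd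

theorem IsCompleteBody.mem_of_forall_gauge_sub_le (hK : IsCompleteBody B K)
    (hB : IsSymUnitBall B) {z : V n} (h : ∀ x ∈ K, gauge B (z - x) ≤ mdiam B K) : z ∈ K := by
  by_contra hz
  have hD := mdiam_nonneg hB hK.1.2.1 (hK.1.2.2.mono interior_subset)
  refine (hK.2 z hz).not_ge (mdiam_le hD ?_)
  rintro x (hx | rfl) y (hy | rfl)
  · exact gauge_sub_le_mdiam hB hK.1.2.1 hx hy
  · rw [hB.gauge_sub_comm]; exact h x hx
  · exact h y hy
  · simpa using hD

namespace HellyProp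

theorem exists_forall_gauge_sub_le_one (hH : HellyProp B k) (hk : 0 < k)
    (hB : IsSymUnitBall B) {X : Set (V n)} (hX : X.Nonempty)
    (hXd : ∀ x ∈ X, ∀ y ∈ X, gauge B (x - y) ≤ (k + 1) / k) :
    ∃ c, ∀ x ∈ X, gauge B (c - x) ≤ 1 := by
  obtain ⟨c, hc⟩ := hH X hX fun J hJX hJcard => by
    rcases J.eq_empty_or_nonempty with rfl | hJ
    · simp
    refine ⟨(J.card : ℝ)⁻¹ • ∑ z ∈ J, z, Set.mem_iInter₂.2 fun y hy => ?_⟩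
    rw [mem_vadd_set_iff_neg_vadd_mem, vadd_eq_add, neg_add_eq_sub, ← hB.gauge_le_one_iff]
    refine (hB.gauge_centroid_sub_le hy fun z hz => hXd z (hJX hz) y (hJX hy)).trans ?_
    have h1 : (1 : ℝ) ≤ J.card := by exact_mod_cast J.card_pos.2 hJ
    have h2 : (J.card : ℝ) ≤ k + 1 := by exact_mod_cast hJcard
    have hkR : (0 : ℝ) < k := by exact_mod_cast hk
    rw [div_mul_div_comm, div_le_one (by positivity)]
    nlinarith
  refine ⟨c, fun x hx => gauge_le_one_of_mem ?_⟩
  simpa [mem_vadd_set_iff_neg_vadd_mem, neg_add_eq_sub] using Set.mem_iInter₂.1 hc x hx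

theorem exists_gauge_sub_le_mdiam (hH : HellyProp B k) (hk : 0 < k) (hB : IsSymUnitBall B)
    (hK : IsCompact K) (hne : K.Nonempty) :
    ∃ c, ∀ x ∈ K, gauge B (c - x) ≤ k / (k + 1) * mdiam B K := by
  obtain ⟨p, hp⟩ := hne
  rcases (mdiam_nonneg hB hK ⟨p, hp⟩).eq_or_lt with hD | hD
  · refine ⟨p, fun x hx => ?_⟩
    simpa [← hD] using gauge_sub_le_mdiam hB hK hp hx
  set ρ : ℝ := k / (k + 1) * mdiam B K
  have hkR : (0 : ℝ) < k := by exact_mod_cast hk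
  have hρ : 0 < ρ := by positivity
  have hscaled : ∀ x ∈ ρ⁻¹ • K, ∀ y ∈ ρ⁻¹ • K, gauge B (x - y) ≤ (k + 1) / k := by
    rintro _ ⟨x, hx, rfl⟩ _ ⟨y, hy, rfl⟩
    rw [← smul_sub, gauge_smul_of_nonneg (inv_nonneg.2 hρ.le), smul_eq_mul, inv_mul_le_iff₀ hρ]
    calc gauge B (x - y) ≤ mdiam B K := gauge_sub_le_mdiam hB hK hx hy
      _ = ρ * ((k + 1) / k) := by simp only [ρ]; field_simp
  obtain ⟨c, hc⟩ := hH.exists_forall_gauge_sub_le_one hk hB (.smul_set ⟨p, hp⟩) hscaled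
  refine ⟨ρ • c, fun x hx => ?_⟩
  calc gauge B (ρ • c - x) = ρ * gauge B (c - ρ⁻¹ • x) := by
        rw [← smul_eq_mul, ← gauge_smul_of_nonneg hρ.le, smul_sub, smul_inv_smul₀ hρ.ne']
    _ ≤ ρ := mul_le_of_le_one_right hρ.le (hc _ (smul_mem_smul_set hx))

end HellyProp

theorem IsCompleteBody.asym_le_of_hellyProp (hK : IsCompleteBody B K) (hB : IsSymUnitBall B)
    (hH : HellyProp B k) (hk : 0 < k) : asym K ≤ k := by
  have hkR : (0 : ℝ) < k := by exact_mod_cast hk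
  obtain ⟨c, hc⟩ := hH.exists_gauge_sub_le_mdiam hk hB hK.1.2.1 (hK.1.2.2.mono interior_subset)
  refine csInf_le ⟨0, fun ρ hρ => hρ.1.le⟩ ⟨hkR, -((k : ℝ) + 1) • c, fun u hu => ?_⟩
  have hw : c + (k : ℝ)⁻¹ • (c + u) ∈ K := hK.mem_of_forall_gauge_sub_le hB fun x hx => by
    calc gauge B (c + (k : ℝ)⁻¹ • (c + u) - x)
        ≤ gauge B (c - x) + (k : ℝ)⁻¹ * gauge B (c - -u) := by
          rw [add_sub_right_comm, sub_neg_eq_add, ← smul_eq_mul,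
            ← gauge_smul_of_nonneg (inv_nonneg.2 hkR.le)]
          exact gauge_add_le hB.1.1 hB.absorbent _ _
      _ ≤ k / (k + 1) * mdiam B K + (k : ℝ)⁻¹ * (k / (k + 1) * mdiam B K) := by
          gcongr
          exacts [hc x hx, hc (-u) hu]
      _ = mdiam B K := by field_simp
  refine ⟨(k : ℝ) • _, smul_mem_smul_set hw, ?_⟩
  dsimp only
  rw [vadd_eq_add, smul_add, smul_inv_smul₀ hkR.ne']
  module

theorem asymConst_le_of_hellyProp (hB : IsSymUnitBall B) (hH : HellyProp B k) (hk : 0 < k) :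
    asymConst B ≤ k :=
  Real.sSup_le (by rintro _ ⟨K, hK, rfl⟩; exact hK.asym_le_of_hellyProp hB hH hk) k.cast_nonneg

theorem Convex.hellyProp (hBc : Convex ℝ B) (hBk : IsCompact B) (hnk : n ≤ k) :
    HellyProp B k := by
  classical
  intro X _ hX
  obtain ⟨z, hz⟩ := Convex.helly_theorem_compact' (𝕜 := ℝ) (F := fun x : X => (x : V n) +ᵥ B)
    (fun x => hBc.vadd _) (fun x => hBk.vadd _) fun I hI => by
      obtain ⟨z, hz⟩ := hX (I.image Subtype.val) (by simp) (Finset.card_image_le.trans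
        (hI.trans (by simpa [finrank_euclideanSpace_fin] using hnk)))
      exact ⟨z, by simpa using hz⟩
  exact ⟨z, by simpa using hz⟩

theorem hellyDim_pos_and_hellyProp (hBc : Convex ℝ B) (hBk : IsCompact B) :
    0 < hellyDim B ∧ HellyProp B (hellyDim B) :=
  Nat.sInf_mem (s := {k | 0 < k ∧ HellyProp B k}) ⟨n + 1, n.succ_pos, hBc.hellyProp hBk n.le_succ⟩

/-- `⌈s(Mⁿ)⌉ ≤ him(Mⁿ)`. -/
theorem stmt10 {n : ℕ} (B : Set (V n)) (hB : IsSymUnitBall B) :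
    ⌈asymConst B⌉ ≤ (hellyDim B : ℤ) := by
  obtain ⟨hk, hH⟩ := hellyDim_pos_and_hellyProp hB.1.1 hB.1.2.1
  rw [Int.ceil_le, Int.cast_natCast]
  exact asymConst_le_of_hellyProp hB hH hk
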